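/- Let L be a positive integer, let V ∈ ℂ^{L×r} be a fixed matrix with orthonormal columns (r ≤ L), let R ≤ L, and let C be a random matrix distributed according to the Haar probability measure on the unitary group U(L). Then, almost surely, the R×r matrix consisting of the first R rows of C V has rank min{r, R}. -/

import Mathlib

open Matrix MeasureTheory

noncomputable instance matrixMeasurableSpace {m n : ℕ} :
    MeasurableSpace (Matrix (Fin m) (Fin n) ℂ) :=
  (inferInstance : MeasurableSpace (Fin m → Fin n → ℂ))

/-!
Put `m = min r R` and let `V₁` be the first `m` columns of `V`; it suffices that the top `m × m`
minor of `g V₁` is almost surely nonzero. By left invariance the measure of the bad set is its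
average over the translates by `F · diag(e^{iθ})`, `F` the discrete Fourier matrix, so by Fubini
it suffices that for each fixed `g` the bad set of `θ ∈ ℝ^L` is null. There the minor is a
polynomial in the `e^{iθ_j}`, and not the zero polynomial: for `m` independent rows `s` of `g V₁`,
substituting the indicator of `s` gives `det F_{[m],s} · det (g V₁)_{s,·}`, a Vandermonde
determinant times a nonzero one. A nonzero polynomial vanishes only on a null subset of the torus.
-/

open ComplexConjugate

instance matrixBorelSpace {m n : ℕ} : BorelSpace (Matrix (Fin m) (Fin n) ℂ) :=
  inferInstanceAs (BorelSpace (Fin m → Fin n → ℂ))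

instance matrixSecondCountableTopology {m n : ℕ} :
    SecondCountableTopology (Matrix (Fin m) (Fin n) ℂ) :=
  inferInstanceAs (SecondCountableTopology (Fin m → Fin n → ℂ))

instance unitaryGroupSecondCountableTopology {n : ℕ} :
    SecondCountableTopology (unitaryGroup (Fin n) ℂ) :=
  inferInstanceAs
    (SecondCountableTopology (unitaryGroup (Fin n) ℂ : Set (Matrix (Fin n) (Fin n) ℂ)))

namespace Matrix

section Field

variable {K : Type*} [Field K]

theorem card_le_rank_of_det_submatrix_ne_zero {m n κ : Type*} [Fintype n] [Fintype κ]
    [DecidableEq κ] (M : Matrix m n K) (e : κ → m) (f : κ → n)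
    (h : (M.submatrix e f).det ≠ 0) : Fintype.card κ ≤ M.rank := by
  rw [← rank_of_isUnit _ ((isUnit_iff_isUnit_det _).mpr (isUnit_iff_ne_zero.mpr h))]
  exact rank_submatrix_le M e f

theorem rank_eq_of_mul_eq_one {m : Type*} {n : ℕ} [Fintype m] (X : Matrix (Fin n) m K)
    (W : Matrix m (Fin n) K) (h : X * W = 1) : W.rank = n :=
  le_antisymm (W.rank_le_card_width.trans_eq (Fintype.card_fin n)) <| by
    simpa [h] using rank_mul_le_right X W

theorem exists_det_submatrix_ne_zero_of_rank_eq {ι : Type*} [Fintype ι] {n : ℕ}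
    (W : Matrix ι (Fin n) K) (hW : W.rank = n) :
    ∃ s : Fin n → ι, Function.Injective s ∧ (W.submatrix s id).det ≠ 0 := by
  obtain ⟨f, hf_mem, -, hf_ind⟩ := Submodule.exists_fun_fin_finrank_span_eq K (Set.range W.row)
  have hn : Module.finrank K (Submodule.span K (Set.range W.row)) = n := by
    rw [← rank_eq_finrank_span_row, hW]
  choose s hs using fun i => hf_mem (Fin.cast hn.symm i)
  have hrows : LinearIndependent K (W.submatrix s id) := by
    have h : W.submatrix s id = f ∘ Fin.cast hn.symm := funext fun i => hs i
    exact h ▸ hf_ind.comp _ (Fin.cast_injective hn.symm)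
  refine ⟨s, fun i j hij => ?_, ?_⟩
  · exact hrows.injective (funext fun k => by simp [hij])
  · exact (isUnit_iff_isUnit_det _).mp (linearIndependent_rows_iff_isUnit.mp hrows) |>.ne_zero

end Field

theorem mul_diagonal_indicator_mul {K ι : Type*} [CommRing K] [Fintype ι] [DecidableEq ι]
    {m : ℕ} (A : Matrix (Fin m) ι K) (W : Matrix ι (Fin m) K) {s : Fin m → ι}
    (hs : Function.Injective s) :
    A * diagonal (fun j => if j ∈ Set.range s then (1 : K) else 0) * W =
      A.submatrix id s * W.submatrix s id := by
  ext i k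
  rw [mul_apply, mul_apply, eq_comm]
  exact Fintype.sum_of_injective s hs _ _
    (fun j hj => by rw [mul_diagonal, if_neg hj, mul_zero, zero_mul]) (fun l => by simp)

theorem diagonal_mem_unitaryGroup {n α : Type*} [Fintype n] [DecidableEq n] [CommRing α]
    [StarRing α] {z : n → α} (hz : ∀ i, z i ∈ unitary α) : diagonal z ∈ unitaryGroup n α := by
  rw [mem_unitaryGroup_iff, star_eq_conjTranspose, diagonal_conjTranspose, diagonal_mul_diagonal,
    ← diagonal_one]
  exact congrArg diagonal (funext fun i => Unitary.mul_star_self_of_mem (hz i))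

end Matrix

theorem Circle.coe_mem_unitary (z : Circle) : (z : ℂ) ∈ unitary ℂ := by
  rw [Unitary.mem_iff_star_mul_self, Complex.star_def, ← Complex.normSq_eq_conj_mul_self]
  simp

theorem Circle.countable_preimage_coe_exp (z : ℂ) :
    ((fun x : ℝ => (Circle.exp x : ℂ)) ⁻¹' {z}).Countable := by
  rcases Set.eq_empty_or_nonempty ((fun x : ℝ => (Circle.exp x : ℂ)) ⁻¹' {z}) with h | ⟨x₀, hx₀⟩
  · exact h ▸ Set.countable_empty
  refine (Set.countable_range fun m : ℤ => x₀ + m * (2 * Real.pi)).mono fun x hx => ?_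
  obtain ⟨m, hm⟩ := Circle.exp_eq_exp.mp (Circle.coe_injective (hx.trans hx₀.symm))
  exact ⟨m, hm.symm⟩

theorem IsPrimitiveRoot.sum_pow_mul_conj_pow {ζ : ℂ} {L : ℕ} (hζ : IsPrimitiveRoot ζ L)
    (j k : Fin L) :
    ∑ l : Fin L, ζ ^ ((j : ℕ) * l) * conj (ζ ^ ((k : ℕ) * l)) = if j = k then (L : ℂ) else 0 := by
  have hL : L ≠ 0 := (Fin.pos j).ne'
  have hconj : conj ζ = ζ⁻¹ := (Complex.inv_eq_conj (hζ.norm'_eq_one hL)).symm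
  set x := ζ ^ (j : ℕ) * ζ⁻¹ ^ (k : ℕ)
  have hterm : ∀ l : ℕ, ζ ^ ((j : ℕ) * l) * conj (ζ ^ ((k : ℕ) * l)) = x ^ l := by
    intro l
    rw [map_pow, hconj, pow_mul, pow_mul, mul_pow]
  simp_rw [hterm]
  rw [Fin.sum_univ_eq_sum_range (x ^ ·)]
  split_ifs with hjk
  · simp [x, hjk, hζ.ne_zero hL]
  · have hx1 : x ≠ 1 := by
      intro h
      refine hjk (Fin.ext (hζ.pow_inj j.2 k.2 ?_))
      rw [← mul_inv_eq_one₀ (pow_ne_zero _ (hζ.ne_zero hL)), ← inv_pow]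
      exact h
    have hxL : x ^ L = 1 := by
      rw [mul_pow, ← pow_mul, ← pow_mul, mul_comm (j : ℕ), mul_comm (k : ℕ), pow_mul, pow_mul,
        inv_pow, hζ.pow_eq_one]
      simp
    rw [geom_sum_eq hx1, hxL, sub_self, zero_div]

noncomputable def dftMatrix (L : ℕ) : Matrix (Fin L) (Fin L) ℂ :=
  of fun j k => (Real.sqrt L : ℂ)⁻¹ * Complex.exp (2 * Real.pi * Complex.I / L) ^ ((j : ℕ) * k)

theorem dftMatrix_mem_unitaryGroup (L : ℕ) : dftMatrix L ∈ unitaryGroup (Fin L) ℂ := by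
  rw [mem_unitaryGroup_iff]
  ext j k
  have hL : L ≠ 0 := (Fin.pos j).ne'
  set ω := Complex.exp (2 * Real.pi * Complex.I / L)
  set c := (Real.sqrt L : ℂ)⁻¹
  have hc : c * conj c = (L : ℂ)⁻¹ := by
    rw [map_inv₀, Complex.conj_ofReal, ← mul_inv, ← Complex.ofReal_mul,
      Real.mul_self_sqrt (Nat.cast_nonneg L)]
    simp
  calc (dftMatrix L * star (dftMatrix L)) j k
      = c * conj c * ∑ l : Fin L, ω ^ ((j : ℕ) * l) * conj (ω ^ ((k : ℕ) * l)) := by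
        simp only [mul_apply, star_apply, dftMatrix, of_apply, RCLike.star_def, map_mul,
          Finset.mul_sum]
        congr 1 with l
        ring
    _ = (1 : Matrix (Fin L) (Fin L) ℂ) j k := by
        rw [hc, (Complex.isPrimitiveRoot_exp L hL).sum_pow_mul_conj_pow, one_apply]
        split_ifs <;> simp [hL]

/-- The submatrix is a scaled Vandermonde matrix in distinct `L`-th roots of unity. -/
theorem det_dftMatrix_submatrix_ne_zero {L m : ℕ} (hmL : m ≤ L) {s : Fin m → Fin L}
    (hs : Function.Injective s) : ((dftMatrix L).submatrix (Fin.castLE hmL) s).det ≠ 0 := by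
  rcases Nat.eq_zero_or_pos L with rfl | hL
  · obtain rfl : m = 0 := Nat.le_zero.mp hmL
    simp
  have hζ := Complex.isPrimitiveRoot_exp L hL.ne'
  set v : Fin m → ℂ := fun k => Complex.exp (2 * Real.pi * Complex.I / L) ^ (s k : ℕ)
  have hv : Function.Injective v := fun k k' h =>
    hs (Fin.ext (hζ.pow_inj (s k).2 (s k').2 h))
  have hmat : (dftMatrix L).submatrix (Fin.castLE hmL) s =
      (Real.sqrt L : ℂ)⁻¹ • (vandermonde v)ᵀ := by
    ext i k
    simp [dftMatrix, v, vandermonde, ← pow_mul, mul_comm]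
  rw [hmat, det_smul, det_transpose]
  exact mul_ne_zero (pow_ne_zero _ (by simp [hL.ne'])) (det_vandermonde_ne_zero_iff.mpr hv)

theorem MvPolynomial.exists_ne_zero_eval_eq_det_mul_diagonal_mul {K ι : Type*} [Field K]
    [Fintype ι] [DecidableEq ι] {m : ℕ} (A : Matrix (Fin m) ι K) (W : Matrix ι (Fin m) K)
    {s : Fin m → ι} (hs : Function.Injective s) (hA : (A.submatrix id s).det ≠ 0)
    (hW : (W.submatrix s id).det ≠ 0) :
    ∃ p : MvPolynomial ι K, p ≠ 0 ∧ ∀ z : ι → K, eval z p = (A * diagonal z * W).det := by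
  set p : MvPolynomial ι K :=
    (A.map (algebraMap K (MvPolynomial ι K)) * diagonal (X : ι → MvPolynomial ι K) *
      W.map (algebraMap K (MvPolynomial ι K))).det with hp_def
  have hp : ∀ z : ι → K, eval z p = (A * diagonal z * W).det := fun z => by
    rw [hp_def, RingHom.map_det, RingHom.mapMatrix_apply, Matrix.map_mul, Matrix.map_mul,
      Matrix.map_map, Matrix.map_map, diagonal_map (map_zero _)]
    simp [Function.comp_def]
  refine ⟨p, fun h0 => ?_, hp⟩
  have := hp (fun j => if j ∈ Set.range s then (1 : K) else 0)
  rw [h0, map_zero, mul_diagonal_indicator_mul A W hs, det_mul] at this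
  exact mul_ne_zero hA hW this.symm

/-- Slicing along the first coordinate, for almost every value of the remaining ones the leading
coefficient does not vanish, and then only countably many values of the first coordinate are
zeros. -/
theorem MvPolynomial.volume_setOf_eval_comp_eq_zero {f : ℝ → ℂ} (hf : Continuous f)
    (hfib : ∀ z, (f ⁻¹' {z}).Countable) :
    ∀ {n : ℕ} {p : MvPolynomial (Fin n) ℂ}, p ≠ 0 →
      volume {θ : Fin n → ℝ | eval (f ∘ θ) p = 0} = 0 := by
  intro n
  induction n with
  | zero =>
    intro p hp
    convert measure_empty (μ := volume)
    refine Set.eq_empty_of_forall_notMem fun θ hθ => hp (MvPolynomial.funext fun x => ?_)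
    rw [Subsingleton.elim x (f ∘ θ), map_zero]
    exact hθ
  | succ n ih =>
    intro p hp
    set q := finSuccEquiv ℂ n p
    have hslice : ∀ θ : Fin n → ℝ, eval (f ∘ θ) q.leadingCoeff ≠ 0 →
        volume {y : ℝ | eval (f ∘ Fin.cons y θ) p = 0} = 0 := by
      intro θ hθ
      have hr : q.map (eval (f ∘ θ)) ≠ 0 := fun h => hθ (by
        rw [Polynomial.leadingCoeff, ← Polynomial.coeff_map, h, Polynomial.coeff_zero])
      refine Set.Countable.measure_zero ?_ _
      refine ((Polynomial.finite_setOfPred_isRoot hr).countable.biUnion fun z _ => hfib z).mono ?_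
      intro y hy
      rw [Set.mem_ofPred_eq, Fin.comp_cons, eval_eq_eval_mv_eval'] at hy
      exact Set.mem_biUnion hy rfl
    have hS : MeasurableSet {θ : Fin (n + 1) → ℝ | eval (f ∘ θ) p = 0} :=
      (isClosed_eq ((continuous_eval p).comp (by fun_prop)) continuous_const).measurableSet
    have hlc : q.leadingCoeff ≠ 0 := Polynomial.leadingCoeff_ne_zero.mpr
      ((EmbeddingLike.map_ne_zero_iff).mpr hp)
    set e := MeasurableEquiv.piFinSuccAbove (fun _ => ℝ) 0
    rw [← (volume_preserving_piFinSuccAbove (fun _ => ℝ) 0).symm.measure_preimage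
      hS.nullMeasurableSet, Measure.volume_eq_prod,
      Measure.prod_apply_symm (e.symm.measurable hS)]
    refine (lintegral_congr_ae ?_).trans lintegral_zero
    filter_upwards [measure_eq_zero_iff_ae_notMem.mp (ih hlc)] with θ hθ
    simpa [e, Fin.insertNth_zero', Fin.consEquiv] using hslice θ hθ

/-- By Fubini on `ν ⊗ μ`, `μ B` is the `ν`-average of `μ (t θ)⁻¹ B` (equal to `μ B` by invariance)
and also the `μ`-average of the `ν`-measure of `{θ | t θ * g ∈ B}`. -/
theorem MeasureTheory.measure_eq_zero_of_forall_measure_mul_mem_eq_zero {G Θ : Type*} [Mul G]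
    [MeasurableSpace G] [MeasurableMul₂ G] [MeasurableSpace Θ] {μ : Measure G} [SFinite μ]
    (hμ : ∀ U, μ.map (U * ·) = μ) {ν : Measure Θ} [SFinite ν] [NeZero ν] {t : Θ → G}
    (ht : Measurable t) {B : Set G} (hB : MeasurableSet B)
    (hnull : ∀ g, ν {θ | t θ * g ∈ B} = 0) : μ B = 0 := by
  set S := {q : Θ × G | t q.1 * q.2 ∈ B}
  have hS : MeasurableSet S := ((ht.comp measurable_fst).mul measurable_snd) hB
  have h1 : ν.prod μ S = μ B * ν Set.univ := by
    rw [Measure.prod_apply hS, ← lintegral_const]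
    refine lintegral_congr fun θ => ?_
    conv_rhs => rw [← hμ (t θ), Measure.map_apply (measurable_const_mul (t θ)) hB]
    rfl
  have h2 : ν.prod μ S = 0 := by
    rw [Measure.prod_apply_symm hS]
    exact (lintegral_congr hnull).trans lintegral_zero
  simpa [NeZero.ne ν] using h1.symm.trans h2

noncomputable def dftMulDiagonal (L : ℕ) (θ : Fin L → ℝ) : unitaryGroup (Fin L) ℂ :=
  ⟨dftMatrix L * diagonal fun j => (Circle.exp (θ j) : ℂ),
    mul_mem (dftMatrix_mem_unitaryGroup L)
      (diagonal_mem_unitaryGroup fun _ => Circle.coe_mem_unitary _)⟩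

theorem continuous_dftMulDiagonal (L : ℕ) : Continuous (dftMulDiagonal L) :=
  (continuous_const.mul (Continuous.matrix_diagonal (by fun_prop))).subtype_mk _

theorem ae_det_submatrix_unitary_mul_ne_zero {L m : ℕ} (hmL : m ≤ L)
    (W : Matrix (Fin L) (Fin m) ℂ) (hW : W.rank = m) {μ : Measure (unitaryGroup (Fin L) ℂ)}
    [SFinite μ] (hμ : ∀ U, μ.map (U * ·) = μ) :
    ∀ᵐ g : unitaryGroup (Fin L) ℂ ∂μ,
      (((g : Matrix (Fin L) (Fin L) ℂ) * W).submatrix (Fin.castLE hmL) id).det ≠ 0 := by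
  set B := {g : unitaryGroup (Fin L) ℂ |
    (((g : Matrix (Fin L) (Fin L) ℂ) * W).submatrix (Fin.castLE hmL) id).det = 0}
  have hB : MeasurableSet B := (isClosed_eq (by fun_prop) continuous_const).measurableSet
  refine measure_eq_zero_iff_ae_notMem.mp <| measure_eq_zero_of_forall_measure_mul_mem_eq_zero hμ
    (ν := volume) (t := dftMulDiagonal L) (continuous_dftMulDiagonal L).measurable hB fun g => ?_
  obtain ⟨s, hs, hdet⟩ :=
    exists_det_submatrix_ne_zero_of_rank_eq ((g : Matrix (Fin L) (Fin L) ℂ) * W)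
    (by rw [rank_mul_eq_right_of_isUnit_det _ _ (UnitaryGroup.det_isUnit g), hW])
  obtain ⟨p, hp0, hp⟩ := MvPolynomial.exists_ne_zero_eval_eq_det_mul_diagonal_mul
    ((dftMatrix L).submatrix (Fin.castLE hmL) id) _ hs (det_dftMatrix_submatrix_ne_zero hmL hs) hdet
  have hset : {θ | dftMulDiagonal L θ * g ∈ B} =
      {θ | MvPolynomial.eval ((fun x : ℝ => (Circle.exp x : ℂ)) ∘ θ) p = 0} := by
    ext θ
    simp only [Set.mem_ofPred_eq, B, hp, dftMulDiagonal, Submonoid.coe_mul, Matrix.mul_assoc]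
    rw [submatrix_mul _ _ _ id _ Function.bijective_id,
      submatrix_mul _ _ _ id _ Function.bijective_id, submatrix_id_id, submatrix_id_id]
    rfl
  have hnull := MvPolynomial.volume_setOf_eval_comp_eq_zero (by fun_prop)
    Circle.countable_preimage_coe_exp hp0
  rwa [← hset] at hnull

theorem stmt7_general {L r R : ℕ} (hr : r ≤ L) (hR : R ≤ L)
    (V : Matrix (Fin L) (Fin r) ℂ) (hV : Vᴴ * V = 1)
    (μ : Measure (Matrix.unitaryGroup (Fin L) ℂ)) [IsProbabilityMeasure μ]
    (hleft : ∀ U : Matrix.unitaryGroup (Fin L) ℂ,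
      Measure.map (fun g : Matrix.unitaryGroup (Fin L) ℂ => U * g) μ = μ) :
    ∀ᵐ g : Matrix.unitaryGroup (Fin L) ℂ ∂μ,
      (((g : Matrix (Fin L) (Fin L) ℂ) * V).submatrix (Fin.castLE hR) id).rank =
        min r R := by
  have hmr : min r R ≤ r := min_le_left r R
  set V₁ := V.submatrix id (Fin.castLE hmr)
  have hV₁ : V₁.rank = min r R := rank_eq_of_mul_eq_one V₁ᴴ V₁ <| by
    rw [conjTranspose_submatrix, ← submatrix_mul _ _ _ _ _ Function.bijective_id, hV]
    exact submatrix_one_embedding ⟨_, Fin.castLE_injective hmr⟩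
  filter_upwards [ae_det_submatrix_unitary_mul_ne_zero (hmr.trans hr) V₁ hV₁ hleft] with g hg
  refine le_antisymm (le_min (rank_le_width _) (rank_le_height _)) ?_
  simpa using card_le_rank_of_det_submatrix_ne_zero _
    (Fin.castLE (min_le_right r R)) (Fin.castLE hmr) hg

/-- If `V ∈ ℂ^{L×r}` is a fixed matrix with orthonormal columns (`r ≤ L`), `R ≤ L`, and
`C` is distributed according to the Haar probability measure on the unitary group `U(L)`
(the unique left- and right-invariant Borel probability measure), then, almost surely,
the `R×r` matrix consisting of the first `R` rows of `C V` has rank `min r R`. -/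
theorem stmt7 {L r R : ℕ} (hL : 0 < L) (hr : r ≤ L) (hR : R ≤ L)
    (V : Matrix (Fin L) (Fin r) ℂ) (hV : Vᴴ * V = 1)
    (μ : Measure (Matrix.unitaryGroup (Fin L) ℂ)) [IsProbabilityMeasure μ]
    (hleft : ∀ U : Matrix.unitaryGroup (Fin L) ℂ,
      Measure.map (fun g : Matrix.unitaryGroup (Fin L) ℂ => U * g) μ = μ)
    (hright : ∀ U : Matrix.unitaryGroup (Fin L) ℂ,
      Measure.map (fun g : Matrix.unitaryGroup (Fin L) ℂ => g * U) μ = μ) :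
    ∀ᵐ g : Matrix.unitaryGroup (Fin L) ℂ ∂μ,
      (((g : Matrix (Fin L) (Fin L) ℂ) * V).submatrix (Fin.castLE hR) id).rank =
        min r R :=
  stmt7_general hr hR V hV μ hleft
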